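/- arXiv:2511.07898 — 2 statements merged into one kernel-verified Lean document; each statement's English description precedes it below -/
import Mathlib

section
/- Let A be a d-th order CP tensor with factor matrices U_p ∈ ℝ^{n_p×R}. Then the minimum of Σ_{r=1}^R ∏_{p=1}^d ( Σ_{l=1}^{n_p} U_p(l,r)·x_p(l)² ) over all families of vectors x_p ∈ ℝ^{n_p} with ‖x_p‖₂ = 1 for every p = 1,…,d is attained and equals the smallest entry of A, i.e., min_{(i_1,…,i_d) ∈ I} A(i_1,…,i_d). -/
/-!
Expanding the product of sums, the form `∑ r, ∏ p, ∑ l, U p l r * x p l ^ 2` is the average of the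
tensor entries `A j` with the weights `∏ p, x p (j p) ^ 2`. These weights are nonnegative and, for
unit vectors `x p`, sum to `∏ p, ‖x p‖² = 1`, so the form is at least the smallest entry; the standard
basis vectors `x p = e_{i p}` put all the weight on a single entry `A i`.
-/

open Finset

section CPTensor

variable {ι ρ S : Type*} {κ : ι → Type*} [Fintype ι] [∀ p, Fintype (κ p)] [Fintype ρ]

def cpTensor [CommSemiring S] (U : ∀ p, κ p → ρ → S) (i : ∀ p, κ p) : S :=
  ∑ r, ∏ p, U p (i p) r

def cpQuadForm [CommSemiring S] (U : ∀ p, κ p → ρ → S) (x : ∀ p, κ p → S) : S :=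
  ∑ r, ∏ p, ∑ l, U p l r * x p l ^ 2

theorem cpQuadForm_single [CommSemiring S] [∀ p, DecidableEq (κ p)] (U : ∀ p, κ p → ρ → S)
    (i : ∀ p, κ p) : cpQuadForm U (fun p => Pi.single (i p) 1) = cpTensor U i := by
  simp [cpQuadForm, cpTensor, Pi.single_apply, ite_pow]

theorem cpQuadForm_eq_sum_mul_cpTensor [CommSemiring S] [DecidableEq ι] (U : ∀ p, κ p → ρ → S)
    (x : ∀ p, κ p → S) :
    cpQuadForm U x = ∑ j : ∀ p, κ p, (∏ p, x p (j p) ^ 2) * cpTensor U j := by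
  simp only [cpQuadForm, cpTensor, Fintype.prod_sum, Finset.mul_sum, ← prod_mul_distrib]
  rw [Finset.sum_comm]
  simp only [mul_comm]

theorem le_cpQuadForm [CommRing S] [LinearOrder S] [IsStrictOrderedRing S]
    (U : ∀ p, κ p → ρ → S) {m : S} (hm : ∀ j, m ≤ cpTensor U j) {x : ∀ p, κ p → S}
    (hx : ∀ p, ∑ l, x p l ^ 2 = 1) : m ≤ cpQuadForm U x := by
  classical
  have hweight : ∑ j : ∀ p, κ p, ∏ p, x p (j p) ^ 2 = 1 := by
    rw [← Fintype.prod_sum (fun p l => x p l ^ 2), Fintype.prod_eq_one _ hx]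
  calc m = ∑ j : ∀ p, κ p, (∏ p, x p (j p) ^ 2) * m := by rw [← sum_mul, hweight, one_mul]
    _ ≤ ∑ j : ∀ p, κ p, (∏ p, x p (j p) ^ 2) * cpTensor U j :=
        sum_le_sum fun j _ => mul_le_mul_of_nonneg_left (hm j) (prod_nonneg fun p _ => sq_nonneg _)
    _ = cpQuadForm U x := (cpQuadForm_eq_sum_mul_cpTensor U x).symm

end CPTensor

/-- The minimum of `∑ r, ∏ p, (∑ l, U p l r * (x p l)^2)` over
families of unit vectors `x p` is attained and equals the smallest entry of the
CP tensor `A (i₁,…,i_d) = ∑ r, ∏ p, U p (i p) r`. -/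
theorem stmt_5 (d R : ℕ) (n : Fin d → ℕ) (hn : ∀ p, 0 < n p)
    (U : ∀ p : Fin d, Matrix (Fin (n p)) (Fin R) ℝ) :
    ∃ m : ℝ,
      IsLeast {a : ℝ | ∃ i : ∀ p : Fin d, Fin (n p),
          a = ∑ r : Fin R, ∏ p : Fin d, U p (i p) r} m ∧
      IsLeast {v : ℝ | ∃ x : ∀ p : Fin d, Fin (n p) → ℝ,
          (∀ p : Fin d, ∑ l, (x p l) ^ 2 = 1) ∧
          v = ∑ r : Fin R, ∏ p : Fin d, (∑ l, U p l r * (x p l) ^ 2)} m := by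
  have : Nonempty (∀ p : Fin d, Fin (n p)) := ⟨fun p => ⟨0, hn p⟩⟩
  obtain ⟨i₀, hi₀⟩ := Finite.exists_min (cpTensor U)
  refine ⟨cpTensor U i₀, ⟨⟨i₀, rfl⟩, ?_⟩,
    ⟨⟨fun p => Pi.single (i₀ p) 1, fun p => by simp [Pi.single_apply, ite_pow], (cpQuadForm_single U i₀).symm⟩, ?_⟩⟩
  · rintro a ⟨i, rfl⟩
    exact hi₀ i
  · rintro v ⟨x, hx, rfl⟩
    exact le_cpQuadForm U hi₀ hx
end

section
/- Let a ∈ ℝ^N, let D = diag(a) be the N×N diagonal matrix with diagonal entries a, and let k be an integer with 1 ≤ k ≤ N. Then the minimum of tr(XᵀDX) over all X ∈ ℝ^{N×k} with XᵀX = I_k is attained and equals the sum of the k smallest entries of a. -/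
/-!
A matrix `X` with `Xᵀ X = I_k` gives `tr (Xᵀ diag(a) X) = ∑ᵢ a i wᵢ` with weights
`wᵢ = (X Xᵀ)ᵢᵢ`; since `X Xᵀ` is a symmetric idempotent, `0 ≤ wᵢ ≤ 1`, and `∑ wᵢ = tr (Xᵀ X) = k`.
Such a fractional selection of `k` entries is never cheaper than the cheapest selection `φ` of `k`
distinct entries: by minimality (exchange one entry) every selected value lies below every
unselected one, and comparing each term with a threshold between them gives the bound.
Conversely the columns `e_{φ j}` realise that cheapest sum.
-/

open Finset Matrix

lemma Finset.exists_forall_le_and_forall_notMem_le {ι R : Type*} [Finite ι] [LinearOrder R]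
    [Nonempty R] (S : Finset ι) (a : ι → R)
    (hS : ∀ i ∈ S, ∀ j ∉ S, a i ≤ a j) :
    ∃ t, (∀ i ∈ S, a i ≤ t) ∧ ∀ j ∉ S, t ≤ a j := by
  rcases S.eq_empty_or_nonempty with rfl | hne
  · obtain ⟨t, ht⟩ := (Set.finite_range a).bddBelow
    exact ⟨t, by simp, fun j _ ↦ ht ⟨j, rfl⟩⟩
  · exact ⟨S.sup' hne a, fun i hi ↦ S.le_sup' a hi,
      fun j hj ↦ S.sup'_le hne a fun i hi ↦ hS i hi j hj⟩

lemma Finset.sum_le_sum_mul_of_forall_le {ι R : Type*} [Fintype ι] [CommRing R] [LinearOrder R]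
    [IsStrictOrderedRing R] (S : Finset ι) (a w : ι → R)
    (hS : ∀ i ∈ S, ∀ j ∉ S, a i ≤ a j) (hw0 : ∀ i, 0 ≤ w i) (hw1 : ∀ i, w i ≤ 1)
    (hsum : ∑ i, w i = #S) :
    ∑ i ∈ S, a i ≤ ∑ i, a i * w i := by
  classical
  obtain ⟨t, hle, hge⟩ := S.exists_forall_le_and_forall_notMem_le a hS
  -- termwise: `(a i - t) (1 - w i) ≤ 0` on `S` and `(t - a i) w i ≤ 0` off `S`
  have hterm : ∀ i, t * w i + (if i ∈ S then a i - t else 0) ≤ a i * w i := by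
    intro i
    split_ifs with hi
    · nlinarith [hle i hi, hw1 i]
    · nlinarith [hge i hi, hw0 i]
  calc ∑ i ∈ S, a i = ∑ i, (t * w i + if i ∈ S then a i - t else 0) := by
        rw [sum_add_distrib, ← mul_sum, hsum, ← sum_filter, filter_mem_eq_inter, univ_inter,
          sum_sub_distrib, sum_const, nsmul_eq_mul]
        ring
    _ ≤ ∑ i, a i * w i := sum_le_sum fun i _ ↦ hterm i

lemma apply_le_of_sum_le_of_notMem_range {κ ι R : Type*} [Fintype κ] [AddCommGroup R]
    [LinearOrder R] [IsOrderedAddMonoid R] {a : ι → R} {φ : κ → ι} (hφ : Function.Injective φ)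
    (hmin : ∀ ψ : κ → ι, Function.Injective ψ → ∑ j, a (φ j) ≤ ∑ j, a (ψ j))
    (j : κ) {i : ι} (hi : i ∉ Set.range φ) : a (φ j) ≤ a i := by
  classical
  have hinj : Function.Injective (Function.update φ j i) := by
    intro x y hxy
    by_cases hx : x = j <;> by_cases hy : y = j <;> simp_all [hφ.eq_iff]
  have hsum : ∑ l, a (Function.update φ j i l) = a i + (∑ l, a (φ l) - a (φ j)) := by
    change ∑ l, (a ∘ Function.update φ j i) l = _
    rw [Function.comp_update, sum_update_of_mem (mem_univ j), ← sum_erase_eq_sub (mem_univ j),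
      sdiff_singleton_eq_erase]
    rfl
  have := hmin _ hinj
  rwa [hsum, add_sub_left_comm, le_add_iff_nonneg_right, sub_nonneg] at this

lemma sum_comp_le_sum_mul_of_forall_sum_comp_le {κ ι R : Type*} [Fintype κ] [Fintype ι]
    [DecidableEq ι] [CommRing R] [LinearOrder R] [IsStrictOrderedRing R]
    {a w : ι → R} {φ : κ → ι} (hφ : Function.Injective φ)
    (hmin : ∀ ψ : κ → ι, Function.Injective ψ → ∑ j, a (φ j) ≤ ∑ j, a (ψ j))
    (hw0 : ∀ i, 0 ≤ w i) (hw1 : ∀ i, w i ≤ 1) (hsum : ∑ i, w i = Fintype.card κ) :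
    ∑ j, a (φ j) ≤ ∑ i, a i * w i := by
  have hS : ∀ i ∈ univ.image φ, ∀ i' ∉ univ.image φ, a i ≤ a i' := by
    simp only [mem_image, mem_univ, true_and, forall_exists_index, forall_apply_eq_imp_iff]
    exact fun j i' hi' ↦ apply_le_of_sum_le_of_notMem_range hφ hmin j (by simpa using hi')
  rw [← sum_image hφ.injOn]
  exact (univ.image φ).sum_le_sum_mul_of_forall_le a w hS hw0 hw1
    (by rw [hsum, card_image_of_injective _ hφ, card_univ])

section Stiefel

variable {m n R : Type*} [Fintype m] [CommRing R]

lemma diag_mul_transpose_nonneg [LinearOrder R] [IsStrictOrderedRing R] (X : Matrix n m R)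
    (i : n) : 0 ≤ (X * Xᵀ) i i := by
  simpa [mul_apply] using sum_nonneg fun j (_ : j ∈ univ) ↦ mul_self_nonneg (X i j)

variable [Fintype n]

lemma diag_mul_transpose_le_one [LinearOrder R] [IsStrictOrderedRing R] [DecidableEq m]
    {X : Matrix n m R} (hX : Xᵀ * X = 1) (i : n) : (X * Xᵀ) i i ≤ 1 := by
  set P := X * Xᵀ
  have hidem : P * P = P := by
    simp only [P, Matrix.mul_assoc, ← Matrix.mul_assoc Xᵀ, hX, Matrix.one_mul]
  have hsq : P i i * P i i ≤ P i i := by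
    calc P i i * P i i ≤ ∑ j, P i j * P j i := by
          refine single_le_sum (f := fun j ↦ P i j * P j i) (fun j _ ↦ ?_) (mem_univ i)
          have : P j i = P i j := by simp [P, mul_apply, mul_comm]
          simpa [this] using mul_self_nonneg (P i j)
      _ = P i i := by rw [← mul_apply, hidem]
  nlinarith [diag_mul_transpose_nonneg X i]

lemma sum_diag_mul_transpose [DecidableEq m] {X : Matrix n m R} (hX : Xᵀ * X = 1) :
    ∑ i, (X * Xᵀ) i i = Fintype.card m := by
  change (X * Xᵀ).trace = _
  rw [trace_mul_comm, hX, trace_one]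

lemma trace_transpose_mul_diagonal_mul [DecidableEq n] (X : Matrix n m R) (a : n → R) :
    (Xᵀ * diagonal a * X).trace = ∑ i, a i * (X * Xᵀ) i i := by
  rw [trace_mul_comm, ← Matrix.mul_assoc, Matrix.trace]
  simp [mul_diagonal, mul_comm]

end Stiefel

section Selection

variable {m n R : Type*} [Fintype n] [DecidableEq m] [DecidableEq n] [CommRing R]

lemma transpose_mul_submatrix_one {φ : m → n} (hφ : Function.Injective φ) :
    ((1 : Matrix n n R).submatrix id φ)ᵀ * (1 : Matrix n n R).submatrix id φ = 1 := by
  rw [transpose_submatrix, transpose_one, ← submatrix_mul _ _ _ _ _ Function.bijective_id,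
    Matrix.mul_one, submatrix_one _ hφ]

lemma trace_transpose_submatrix_one_mul_diagonal_mul [Fintype m] {φ : m → n}
    (hφ : Function.Injective φ) (a : n → R) :
    (((1 : Matrix n n R).submatrix id φ)ᵀ * diagonal a * (1 : Matrix n n R).submatrix id φ).trace
      = ∑ j, a (φ j) := by
  rw [transpose_submatrix, transpose_one, ← submatrix_id_id (diagonal a),
    ← submatrix_mul _ _ _ _ _ Function.bijective_id, ← submatrix_mul _ _ _ _ _ Function.bijective_id,
    Matrix.one_mul, Matrix.mul_one, submatrix_diagonal _ _ hφ, trace_diagonal]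
  rfl

end Selection

theorem stmt_15_general (N k : ℕ) (a : Fin N → ℝ) (hk2 : k ≤ N) :
    ∃ m : ℝ,
      IsLeast {s : ℝ | ∃ φ : Fin k → Fin N, Function.Injective φ ∧
          s = ∑ j : Fin k, a (φ j)} m ∧
      IsLeast {v : ℝ | ∃ X : Matrix (Fin N) (Fin k) ℝ,
          Xᵀ * X = 1 ∧ v = (Xᵀ * Matrix.diagonal a * X).trace} m := by
  obtain ⟨φ, hφ, hmin⟩ := Set.exists_min_image {φ : Fin k → Fin N | Function.Injective φ}
    (fun φ ↦ ∑ j, a (φ j)) (Set.toFinite _) ⟨_, Fin.castLE_injective hk2⟩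
  refine ⟨∑ j, a (φ j), ⟨⟨φ, hφ, rfl⟩, ?_⟩,
    ⟨⟨_, transpose_mul_submatrix_one hφ, (trace_transpose_submatrix_one_mul_diagonal_mul hφ a).symm⟩,
      ?_⟩⟩
  · rintro _ ⟨ψ, hψ, rfl⟩
    exact hmin ψ hψ
  · rintro _ ⟨X, hX, rfl⟩
    rw [trace_transpose_mul_diagonal_mul]
    exact sum_comp_le_sum_mul_of_forall_sum_comp_le hφ hmin (diag_mul_transpose_nonneg X)
      (diag_mul_transpose_le_one hX) (sum_diag_mul_transpose hX)

/-- The minimum of `tr (Xᵀ D X)` over all `X ∈ ℝ^{N×k}` with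
orthonormal columns, where `D = diag a`, is attained and equals the sum of
the `k` smallest entries of `a`. -/
theorem stmt_15 (N k : ℕ) (a : Fin N → ℝ) (hk1 : 1 ≤ k) (hk2 : k ≤ N) :
    ∃ m : ℝ,
      IsLeast {s : ℝ | ∃ φ : Fin k → Fin N, Function.Injective φ ∧
          s = ∑ j : Fin k, a (φ j)} m ∧
      IsLeast {v : ℝ | ∃ X : Matrix (Fin N) (Fin k) ℝ,
          Xᵀ * X = 1 ∧ v = (Xᵀ * Matrix.diagonal a * X).trace} m :=
  stmt_15_general N k a hk2
end
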